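/- arXiv:2009.08177 — 3 statements merged into one kernel-verified Lean document; each statement's English description precedes it below -/
import Mathlib

section
/- Let G be a connected simple graph and let {E_1, …, E_k} be a c-partition of E(G). If e = uv ∈ E_i for some i ∈ {1, …, k}, then ℓ_i(u) and ℓ_i(v) are adjacent vertices of the quotient graph G/E_i, i.e. ℓ_i(u)ℓ_i(v) is an edge of G/E_i. -/
open SimpleGraph

namespace SzegedCut

variable {V : Type*}

/-- `N_u(e|G)` for the edge `e = uv`: vertices strictly closer to `u` than to `v`. -/
def Nset (G : SimpleGraph V) (u v : V) : Set V := {x | G.dist u x < G.dist v x}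

/-- `N_0(e|G)` for the edge `e = uv`: vertices equidistant from `u` and `v`. -/
def N0set (G : SimpleGraph V) (u v : V) : Set V := {x | G.dist u x = G.dist v x}

/-- Distance from a vertex to an edge: minimum over the endpoints of the edge. -/
noncomputable def eDist (G : SimpleGraph V) (u : V) : Sym2 V → ℕ :=
  Sym2.lift ⟨fun x y => min (G.dist u x) (G.dist u y), fun x y => min_comm _ _⟩

/-- `M_u(e|G)` for the edge `e = uv`: edges strictly closer to `u` than to `v`. -/
def Mset (G : SimpleGraph V) (u v : V) : Set (Sym2 V) :=
  {f | f ∈ G.edgeSet ∧ eDist G u f < eDist G v f}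

/-- `M_0(e|G)` for the edge `e = uv`: edges equidistant from `u` and `v`. -/
def M0set (G : SimpleGraph V) (u v : V) : Set (Sym2 V) :=
  {f | f ∈ G.edgeSet ∧ eDist G u f = eDist G v f}

/-- The Djoković–Winkler relation `Θ` on the edges of `G`. -/
def Theta (G : SimpleGraph V) (e₁ e₂ : Sym2 V) : Prop :=
  e₁ ∈ G.edgeSet ∧ e₂ ∈ G.edgeSet ∧
    ∃ u₁ v₁ u₂ v₂, e₁ = s(u₁, v₁) ∧ e₂ = s(u₂, v₂) ∧
      G.dist u₁ u₂ + G.dist v₁ v₂ ≠ G.dist u₁ v₂ + G.dist u₂ v₁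

/-- `Θ*`, the transitive closure of the Djoković–Winkler relation. -/
def ThetaStar (G : SimpleGraph V) : Sym2 V → Sym2 V → Prop :=
  Relation.TransGen (Theta G)

/-- A c-partition of `E(G)`: a partition of the edge set each of whose parts is a
union of `Θ*`-classes (equivalently, is closed under `Θ*`). -/
def IsCPartition (G : SimpleGraph V) {k : ℕ} (P : Fin k → Set (Sym2 V)) : Prop :=
  (⋃ i, P i) = G.edgeSet ∧
  (∀ i j, i ≠ j → Disjoint (P i) (P j)) ∧
  (∀ i, ∀ e ∈ P i, ∀ f, ThetaStar G e f → f ∈ P i)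

/-- The connected components of `G \ F`, i.e. the vertices of the quotient graph `G/F`. -/
abbrev Comp (G : SimpleGraph V) (F : Set (Sym2 V)) := (G.deleteEdges F).ConnectedComponent

/-- `ℓ(u)`: the connected component of `G \ F` containing `u`. -/
def proj (G : SimpleGraph V) (F : Set (Sym2 V)) (u : V) : Comp G F :=
  (G.deleteEdges F).connectedComponentMk u

/-- The quotient graph `G/F`: vertices are the connected components of `G \ F`,
two components being adjacent iff some vertex of one is adjacent in `G` to a
vertex of the other. -/
def quotGraph (G : SimpleGraph V) (F : Set (Sym2 V)) : SimpleGraph (Comp G F) where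
  Adj X Y := X ≠ Y ∧ ∃ x y, G.Adj x y ∧ proj G F x = X ∧ proj G F y = Y
  symm := by
    constructor
    rintro X Y ⟨hne, x, y, hadj, hx, hy⟩
    exact ⟨hne.symm, y, x, hadj.symm, hy, hx⟩
  loopless := by constructor; rintro X ⟨hne, -⟩; exact hne rfl

/-- `Ê` for a quotient edge `E`: the edges of `G` joining the two components of `E`. -/
def hatE (G : SimpleGraph V) (F : Set (Sym2 V)) (E : Sym2 (Comp G F)) : Set (Sym2 V) :=
  {e | e ∈ G.edgeSet ∧ e.map (proj G F) = E}

/-- `E(X)` for a component `X` of `G \ F`: the edges of `G \ F` lying inside `X`. -/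
def compEdges (G : SimpleGraph V) (F : Set (Sym2 V)) (X : Comp G F) : Set (Sym2 V) :=
  {f | f ∈ (G.deleteEdges F).edgeSet ∧ ∀ x ∈ f, x ∈ X.supp}

/-- Sum of a weight function over a set. -/
noncomputable def vsum {α : Type*} (s : Set α) (w : α → ℝ) : ℝ := ∑ᶠ x ∈ s, w x

/-- `n_u(e|G_sw)` for `e = uv`. -/
noncomputable def nval (G : SimpleGraph V) (wv : V → ℝ) (u v : V) : ℝ :=
  vsum (Nset G u v) wv

/-- `n_0(e|G_sw)` for `e = uv`. -/
noncomputable def n0val (G : SimpleGraph V) (wv : V → ℝ) (u v : V) : ℝ :=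
  vsum (N0set G u v) wv

/-- `m_u(e|G_sw)` for `e = uv`. -/
noncomputable def mval (G : SimpleGraph V) (sv : V → ℝ) (se : Sym2 V → ℝ) (u v : V) : ℝ :=
  vsum (Nset G u v) sv + vsum (Mset G u v) se

/-- `m_0(e|G_sw)` for `e = uv`. -/
noncomputable def m0val (G : SimpleGraph V) (sv : V → ℝ) (se : Sym2 V → ℝ) (u v : V) : ℝ :=
  vsum (N0set G u v) sv + vsum (M0set G u v) se

lemma N0set_comm (G : SimpleGraph V) (u v : V) : N0set G u v = N0set G v u :=
  Set.ext fun _ => eq_comm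

lemma M0set_comm (G : SimpleGraph V) (u v : V) : M0set G u v = M0set G v u :=
  Set.ext fun _ => and_congr_right fun _ => eq_comm

lemma n0val_comm (G : SimpleGraph V) (wv : V → ℝ) (u v : V) :
    n0val G wv u v = n0val G wv v u := by rw [n0val, n0val, N0set_comm]

lemma m0val_comm (G : SimpleGraph V) (sv : V → ℝ) (se : Sym2 V → ℝ) (u v : V) :
    m0val G sv se u v = m0val G sv se v u := by
  rw [m0val, m0val, N0set_comm, M0set_comm]

/-- A regular function of six variables: symmetric in the first two and in the
next two coordinates. -/
def IsRegular (F : ℝ → ℝ → ℝ → ℝ → ℝ → ℝ → ℝ) : Prop :=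
  ∀ a b c d x y, F a b c d x y = F b a d c x y

/-- `F(e|G_sw)` for a regular function `F`. -/
noncomputable def FEdge (G : SimpleGraph V) (wv sv : V → ℝ) (se : Sym2 V → ℝ)
    (F : ℝ → ℝ → ℝ → ℝ → ℝ → ℝ → ℝ) (hF : IsRegular F) : Sym2 V → ℝ :=
  Sym2.lift ⟨fun u v =>
      F (nval G wv u v) (nval G wv v u) (mval G sv se u v) (mval G sv se v u)
        (n0val G wv u v) (m0val G sv se u v),
    fun u v => by dsimp only; rw [hF, n0val_comm, m0val_comm]⟩

/-- The general Szeged-like topological index `TI_F(G_sw)`. -/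
noncomputable def TI (G : SimpleGraph V) (wv sv : V → ℝ) (we se : Sym2 V → ℝ)
    (F : ℝ → ℝ → ℝ → ℝ → ℝ → ℝ → ℝ) (hF : IsRegular F) : ℝ :=
  ∑ᶠ e ∈ G.edgeSet, we e * FEdge G wv sv se F hF e

/-- Vertex weight `w_v^i` of the strength-weighted quotient graph. -/
noncomputable def qwv (G : SimpleGraph V) (F : Set (Sym2 V)) (wv : V → ℝ)
    (X : Comp G F) : ℝ :=
  vsum X.supp wv

/-- Vertex weight `s_v^i` of the strength-weighted quotient graph. -/
noncomputable def qsv (G : SimpleGraph V) (F : Set (Sym2 V)) (sv : V → ℝ)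
    (se : Sym2 V → ℝ) (X : Comp G F) : ℝ :=
  vsum (compEdges G F X) se + vsum X.supp sv

/-- Edge weight `w_e^i` of the strength-weighted quotient graph. -/
noncomputable def qwe (G : SimpleGraph V) (F : Set (Sym2 V)) (we : Sym2 V → ℝ)
    (E : Sym2 (Comp G F)) : ℝ :=
  vsum (hatE G F E) we

/-- Edge weight `s_e^i` of the strength-weighted quotient graph. -/
noncomputable def qse (G : SimpleGraph V) (F : Set (Sym2 V)) (se : Sym2 V → ℝ)
    (E : Sym2 (Comp G F)) : ℝ :=
  vsum (hatE G F E) se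


/-- **Statement 0 helper.** Along a walk none of whose edges are `Θ`-related to `s(u,v)`, the integer
difference `d(u,·) - d(v,·)` is constant. -/
lemma dist_diff_const_of_walk {V : Type*} (G : SimpleGraph V) {u v : V} (huv : s(u, v) ∈ G.edgeSet)
    {H : SimpleGraph V} (hH : H ≤ G) {a b : V} (W : H.Walk a b)
    (hW : ∀ f ∈ W.edges, ¬ Theta G s(u, v) f) :
    (G.dist u a : ℤ) - G.dist v a = (G.dist u b : ℤ) - G.dist v b := by
  induction W with
  | nil => rfl
  | @cons a c b hac p ih =>
    have hf : s(a, c) ∈ G.edgeSet := hH hac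
    have hnt : ¬ Theta G s(u, v) s(a, c) := hW _ (by simp)
    have key : G.dist u a + G.dist v c = G.dist u c + G.dist a v := by
      by_contra hne
      exact hnt ⟨huv, hf, u, v, a, c, rfl, rfl, hne⟩
    have ih' := ih fun f hf => hW f (by simp [hf])
    have : (G.dist u a : ℤ) - G.dist v a = (G.dist u c : ℤ) - G.dist v c := by
      have := congrArg (fun n : ℕ => (n : ℤ)) key
      push_cast at this
      rw [show G.dist a v = G.dist v a from SimpleGraph.dist_comm] at this
      linarith
    rw [this]; exact ih'

/-- If `G` is connected, `{E_1, …, E_k}` is a c-partition of `E(G)` and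
`e = uv ∈ E_i`, then `ℓ_i(u)` and `ℓ_i(v)` are adjacent vertices of the quotient graph
`G/E_i`. -/
theorem adj_of_quotient {V : Type*} [Finite V] (G : SimpleGraph V) (hG : G.Connected)
    {k : ℕ} (P : Fin k → Set (Sym2 V)) (hP : IsCPartition G P)
    (i : Fin k) (u v : V) (he : s(u, v) ∈ P i) :
    (quotGraph G (P i)).Adj (proj G (P i) u) (proj G (P i) v) := by
  obtain ⟨hcover, hdisj, hclosed⟩ := hP
  have heE : s(u, v) ∈ G.edgeSet := by
    rw [← hcover]; exact Set.mem_iUnion.2 ⟨i, he⟩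
  have hadj : G.Adj u v := heE
  refine ⟨?_, u, v, hadj, rfl, rfl⟩
  intro hpq
  -- from equal components, get a walk in G \ E_i from u to v
  have hreach : (G.deleteEdges (P i)).Reachable u v :=
    SimpleGraph.ConnectedComponent.eq.1 hpq
  obtain ⟨W⟩ := hreach
  have hH : G.deleteEdges (P i) ≤ G := SimpleGraph.deleteEdges_le _
  -- no edge of W is Θ-related to s(u,v)
  have hW : ∀ f ∈ W.edges, ¬ Theta G s(u, v) f := by
    intro f hf ht
    have hfPi : f ∈ P i := hclosed i _ he f (Relation.TransGen.single ht)
    have hfH : f ∈ (G.deleteEdges (P i)).edgeSet := W.edges_subset_edgeSet hf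
    rw [SimpleGraph.edgeSet_deleteEdges] at hfH
    exact hfH.2 hfPi
  have hconst := dist_diff_const_of_walk G heE hH W hW
  have h1 : G.dist u u = 0 := by simp
  have h2 : G.dist v v = 0 := by simp
  have h3 : G.dist u v = G.dist v u := SimpleGraph.dist_comm
  have hpos : 0 < G.dist u v := hG.pos_dist_of_ne hadj.ne
  rw [h1, h2, h3] at hconst
  omega

end SzegedCut
end

section
/- Let G be a connected simple graph, {E_1, …, E_k} a c-partition of E(G), e = uv ∈ E_i, U = ℓ_i(u), V = ℓ_i(v), and E = UV the corresponding edge of G_i = G/E_i. Then N_u(e|G) = ⋃_{X ∈ N_U(E|G_i)} V(X) and N_v(e|G) = ⋃_{X ∈ N_V(E|G_i)} V(X); that is, a vertex x of G is strictly closer to u than to v if and only if its component ℓ_i(x) is strictly closer to U than to V in G_i. -/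
open SimpleGraph

namespace SzegedCut

variable {V : Type*}

/-! ### Auxiliary development for Statement 1 -/

section CutMethod

variable {W : Type*} (G : SimpleGraph W) (C : Set (Sym2 W))

/-- signed distance difference -/
noncomputable def gfun (a b z : W) : ℤ := (G.dist a z : ℤ) - (G.dist b z : ℤ)

open Classical in
/-- number of `C`-edges along a walk -/
noncomputable def cntC : ∀ {x y : W}, G.Walk x y → ℕ
  | _, _, Walk.nil => 0
  | _, _, @Walk.cons _ _ a b _ _ p => (if s(a, b) ∈ C then 1 else 0) + cntC p

open Classical in
/-- potential function along a walk -/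
noncomputable def piC (z : W) : ∀ {x y : W}, G.Walk x y → ℤ
  | _, _, Walk.nil => 0
  | _, _, @Walk.cons _ _ a b _ _ p => (if s(a, b) ∈ C then gfun G a b z else 0) + piC z p

open Classical in
@[simp] lemma cntC_nil {x : W} : cntC G C (Walk.nil : G.Walk x x) = 0 := rfl

open Classical in
@[simp] lemma cntC_cons {a b y : W} (h : G.Adj a b) (p : G.Walk b y) :
    cntC G C (Walk.cons h p) = (if s(a, b) ∈ C then 1 else 0) + cntC G C p := rfl

open Classical in
@[simp] lemma piC_nil {z x : W} : piC G C z (Walk.nil : G.Walk x x) = 0 := rfl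

open Classical in
@[simp] lemma piC_cons {z a b y : W} (h : G.Adj a b) (p : G.Walk b y) :
    piC G C z (Walk.cons h p) =
      (if s(a, b) ∈ C then gfun G a b z else 0) + piC G C z p := rfl

variable {G C}

lemma dist_adj_le (hG : G.Connected) {a b z : W} (h : G.Adj a b) :
    G.dist a z ≤ G.dist b z + 1 := by
  have h1 : G.dist a z ≤ G.dist a b + G.dist b z := hG.dist_triangle
  have h2 : G.dist a b = 1 := by rwa [SimpleGraph.dist_eq_one_iff_adj]
  omega

/-- edges not in a Θ-closed set are not Θ-related to edges of `C`. -/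
lemma not_theta_eq (hCc : ∀ e ∈ C, ∀ f, Theta G e f → f ∈ C)
    {a b c d : W} (hab : s(a, b) ∈ C) (habE : s(a, b) ∈ G.edgeSet)
    (hcd : G.Adj c d) (hcdC : s(c, d) ∉ C) :
    G.dist a c + G.dist b d = G.dist a d + G.dist c b := by
  by_contra hne
  exact hcdC (hCc _ hab _ ⟨habE, hcd, a, b, c, d, rfl, rfl, hne⟩)

/-- transfer of `gfun` across a non-`C` edge. -/
lemma gfun_step (hCc : ∀ e ∈ C, ∀ f, Theta G e f → f ∈ C)
    {a b c d : W} (hab : s(a, b) ∈ C) (habE : s(a, b) ∈ G.edgeSet)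
    (hcd : G.Adj c d) (hcdC : s(c, d) ∉ C) :
    gfun G a b c = gfun G a b d := by
  have h := not_theta_eq hCc hab habE hcd hcdC
  have hc : G.dist c b = G.dist b c := SimpleGraph.dist_comm ..
  unfold gfun
  omega

/-- `gfun G a b` is constant on components of `G − C`. -/
lemma gfun_const (hCc : ∀ e ∈ C, ∀ f, Theta G e f → f ∈ C)
    {a b p q : W} (hab : s(a, b) ∈ C) (habE : s(a, b) ∈ G.edgeSet)
    (h : (G.deleteEdges C).Reachable p q) :
    gfun G a b p = gfun G a b q := by
  obtain ⟨R⟩ := h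
  induction R with
  | nil => rfl
  | cons hadj _ ih =>
    rw [SimpleGraph.deleteEdges_adj] at hadj
    exact (gfun_step hCc hab habE hadj.1 hadj.2).trans ih

lemma gfun_swap {a b p q : W} :
    gfun G a b p - gfun G a b q = gfun G p q a - gfun G p q b := by
  unfold gfun
  have h1 : G.dist a p = G.dist p a := SimpleGraph.dist_comm ..
  have h2 : G.dist b p = G.dist p b := SimpleGraph.dist_comm ..
  have h3 : G.dist a q = G.dist q a := SimpleGraph.dist_comm ..
  have h4 : G.dist b q = G.dist q b := SimpleGraph.dist_comm ..
  omega

open Classical in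
/-- difference of potentials at the two endpoints of a `C`-edge. -/
lemma piC_sub (hCc : ∀ e ∈ C, ∀ f, Theta G e f → f ∈ C)
    {p q : W} (hpq : s(p, q) ∈ C) (hpqE : s(p, q) ∈ G.edgeSet)
    {α β : W} (Wk : G.Walk α β) :
    piC G C p Wk - piC G C q Wk = gfun G p q α - gfun G p q β := by
  induction Wk with
  | nil => simp
  | @cons a b _ hadj p' ih =>
    rw [piC_cons, piC_cons]
    by_cases hc : s(a, b) ∈ C
    · rw [if_pos hc, if_pos hc]
      have hs : gfun G a b p - gfun G a b q = gfun G p q a - gfun G p q b := gfun_swap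
      omega
    · rw [if_neg hc, if_neg hc]
      have hstep : gfun G p q a = gfun G p q b := gfun_step hCc hpq hpqE hadj hc
      omega

open Classical in
/-- the potential is constant on components of `G − C`. -/
lemma piC_const (hCc : ∀ e ∈ C, ∀ f, Theta G e f → f ∈ C)
    {z z' : W} (h : (G.deleteEdges C).Reachable z z')
    {α β : W} (Wk : G.Walk α β) :
    piC G C z Wk = piC G C z' Wk := by
  induction Wk with
  | nil => simp
  | @cons a b _ hadj p' ih =>
    rw [piC_cons, piC_cons]
    by_cases hc : s(a, b) ∈ C
    · rw [if_pos hc, if_pos hc, ih, gfun_const hCc hc (G.mem_edgeSet.mpr hadj) h]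
    · rw [if_neg hc, if_neg hc, ih]

open Classical in
/-- endpoint values of the potential along a geodesic walk. -/
lemma piC_ends (hG : G.Connected) (hCc : ∀ e ∈ C, ∀ f, Theta G e f → f ∈ C)
    {x y : W} (Wk : G.Walk x y) (hW : Wk.length = G.dist x y) :
    piC G C y Wk - piC G C x Wk = 2 * (cntC G C Wk : ℤ) := by
  induction Wk with
  | nil => simp
  | @cons a b c hadj p ih =>
    have l1 : G.dist b c ≤ p.length := SimpleGraph.dist_le p
    have l2 : G.dist a c ≤ G.dist b c + 1 := dist_adj_le hG hadj
    have hlen : (Walk.cons hadj p).length = p.length + 1 := by simp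
    have hbc : G.dist b c = p.length := by omega
    have hac : G.dist a c = G.dist b c + 1 := by omega
    have ih' := ih hbc.symm
    rw [piC_cons, piC_cons, cntC_cons]
    have hab : G.dist a b = 1 := SimpleGraph.dist_eq_one_iff_adj.mpr hadj
    have hba : G.dist b a = 1 := SimpleGraph.dist_eq_one_iff_adj.mpr hadj.symm
    by_cases hc : s(a, b) ∈ C
    · rw [if_pos hc, if_pos hc, if_pos hc]
      have hsub := piC_sub hCc hc (G.mem_edgeSet.mpr hadj) p
      have g1 : gfun G a b c = 1 := by unfold gfun; omega
      have g2 : gfun G a b a = -1 := by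
        unfold gfun; rw [SimpleGraph.dist_self]; omega
      have g3 : gfun G a b b = 1 := by
        unfold gfun; rw [SimpleGraph.dist_self]; omega
      rw [g1, g3] at hsub
      push_cast
      omega
    · rw [if_neg hc, if_neg hc, if_neg hc]
      have hreach : (G.deleteEdges C).Reachable a b :=
        (SimpleGraph.deleteEdges_adj.mpr ⟨hadj, hc⟩).reachable
      have hcn : piC G C a p = piC G C b p := piC_const hCc hreach p
      push_cast
      omega
lemma proj_eq_of_adj_nC {z w : W} (h : G.Adj z w) (hn : s(z, w) ∉ C) :
    proj G C z = proj G C w :=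
  SimpleGraph.ConnectedComponent.connectedComponentMk_eq_of_adj (SimpleGraph.deleteEdges_adj.mpr ⟨h, hn⟩)

lemma mem_C_of_proj_ne {p q : W} (h : G.Adj p q) (hne : proj G C p ≠ proj G C q) :
    s(p, q) ∈ C := by
  by_contra hn
  exact hne (proj_eq_of_adj_nC h hn)

open Classical in
/-- the potential as a function on components. -/
noncomputable def varPi (hCc : ∀ e ∈ C, ∀ f, Theta G e f → f ∈ C)
    {α β : W} (Wk : G.Walk α β) : Comp G C → ℤ :=
  ConnectedComponent.lift (fun z => piC G C z Wk) (fun _ _ R _ => piC_const hCc ⟨R⟩ Wk)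

open Classical in
@[simp] lemma varPi_mk (hCc : ∀ e ∈ C, ∀ f, Theta G e f → f ∈ C)
    {α β : W} (Wk : G.Walk α β) (z : W) :
    varPi hCc Wk (proj G C z) = piC G C z Wk := rfl

open Classical in
lemma varPi_adj (hG : G.Connected) (hCc : ∀ e ∈ C, ∀ f, Theta G e f → f ∈ C)
    {α β : W} (Wk : G.Walk α β) {X Y : Comp G C}
    (hA : (quotGraph G C).Adj X Y) : |varPi hCc Wk X - varPi hCc Wk Y| ≤ 2 := by
  obtain ⟨hne, p, q, hadj, hp, hq⟩ := hA
  subst hp; subst hq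
  have hpq : s(p, q) ∈ C := mem_C_of_proj_ne hadj hne
  have hsub := piC_sub hCc hpq (G.mem_edgeSet.mpr hadj) Wk
  have b1 : G.dist p α ≤ G.dist q α + 1 := dist_adj_le hG hadj
  have b2 : G.dist q α ≤ G.dist p α + 1 := dist_adj_le hG hadj.symm
  have b3 : G.dist p β ≤ G.dist q β + 1 := dist_adj_le hG hadj
  have b4 : G.dist q β ≤ G.dist p β + 1 := dist_adj_le hG hadj.symm
  rw [varPi_mk, varPi_mk]
  unfold gfun at hsub
  rw [abs_le]
  constructor <;> omega

open Classical in
lemma varPi_walk (hG : G.Connected) (hCc : ∀ e ∈ C, ∀ f, Theta G e f → f ∈ C)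
    {α β : W} (Wk : G.Walk α β) {A B : Comp G C} (R : (quotGraph G C).Walk A B) :
    |varPi hCc Wk A - varPi hCc Wk B| ≤ 2 * (R.length : ℤ) := by
  induction R with
  | nil => simp
  | @cons A X B hadj R ih =>
    have h1 := varPi_adj hG hCc Wk hadj
    have h2 := abs_sub_le (varPi hCc Wk A) (varPi hCc Wk X) (varPi hCc Wk B)
    rw [Walk.length_cons]
    push_cast
    linarith

lemma reach_proj {z z' : W} (R : G.Walk z z') :
    (quotGraph G C).Reachable (proj G C z) (proj G C z') := by
  induction R with
  | nil => exact SimpleGraph.Reachable.refl _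
  | @cons a b c hadj p ih =>
    by_cases hc : proj G C a = proj G C b
    · rw [hc]; exact ih
    · have hA : (quotGraph G C).Adj (proj G C a) (proj G C b) := ⟨hc, a, b, hadj, rfl, rfl⟩
      exact hA.reachable.trans ih

lemma quot_connected (hG : G.Connected) : (quotGraph G C).Connected := by
  have hne : Nonempty W := hG.nonempty
  haveI : Nonempty (Comp G C) := ⟨proj G C (Classical.arbitrary W)⟩
  constructor
  intro A B
  induction A, B using SimpleGraph.ConnectedComponent.ind₂ with
  | _ v w =>
    obtain ⟨R⟩ := hG.preconnected v w
    exact reach_proj R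

open Classical in
/-- Key lemma: the quotient distance equals the number of `C`-edges
on any geodesic walk. -/
lemma quotDist_eq_cnt (hG : G.Connected) (hCc : ∀ e ∈ C, ∀ f, Theta G e f → f ∈ C)
    {x y : W} (Wk : G.Walk x y) (hW : Wk.length = G.dist x y) :
    (quotGraph G C).dist (proj G C x) (proj G C y) = cntC G C Wk := by
  have hQc : (quotGraph G C).Connected := quot_connected hG
  have ub : ∀ {z z' : W} (Q : G.Walk z z'),
      (quotGraph G C).dist (proj G C z) (proj G C z') ≤ cntC G C Q := by
    intro z z' Q
    induction Q with
    | nil => simp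
    | @cons a b c hadj p ih =>
      rw [cntC_cons]
      by_cases hc : s(a, b) ∈ C
      · rw [if_pos hc]
        have tri := hQc.dist_triangle (u := proj G C a) (v := proj G C b) (w := proj G C c)
        have h1 : (quotGraph G C).dist (proj G C a) (proj G C b) ≤ 1 := by
          by_cases he : proj G C a = proj G C b
          · rw [he, SimpleGraph.dist_self]; omega
          · exact le_of_eq (SimpleGraph.dist_eq_one_iff_adj.mpr ⟨he, a, b, hadj, rfl, rfl⟩)
        omega
      · rw [if_neg hc, proj_eq_of_adj_nC hadj hc]
        omega
  have hub := ub Wk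
  obtain ⟨R, hR⟩ := (reach_proj (C := C) Wk).exists_walk_length_eq_dist
  have hb := varPi_walk hG hCc Wk R
  have he := piC_ends hG hCc Wk hW
  rw [varPi_mk, varPi_mk, hR] at hb
  rw [abs_le] at hb
  have hlb : (cntC G C Wk : ℤ) ≤
      ((quotGraph G C).dist (proj G C x) (proj G C y) : ℤ) := by omega
  omega
open Classical in
lemma dir1 (hG : G.Connected) (hCc : ∀ e ∈ C, ∀ f, Theta G e f → f ∈ C)
    {u v y : W} (huv : s(u, v) ∈ C) (hadj : G.Adj u v)
    (hd : G.dist u y = G.dist v y + 1) :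
    (quotGraph G C).dist (proj G C u) (proj G C y)
      = (quotGraph G C).dist (proj G C v) (proj G C y) + 1 := by
  obtain ⟨Q, hQ⟩ := hG.exists_walk_length_eq_dist v y
  have hW : (Walk.cons hadj Q).length = G.dist u y := by
    rw [Walk.length_cons, hQ, hd]
  have k1 := quotDist_eq_cnt hG hCc (Walk.cons hadj Q) hW
  have k2 := quotDist_eq_cnt hG hCc Q hQ
  rw [cntC_cons, if_pos huv] at k1
  omega

open Classical in
lemma dir2half (hG : G.Connected) (hCc : ∀ e ∈ C, ∀ f, Theta G e f → f ∈ C)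
    {u v y : W} (huv : s(u, v) ∈ C) (hadj : G.Adj u v)
    (hd : G.dist u y = G.dist v y) :
    (quotGraph G C).dist (proj G C u) (proj G C y)
      ≤ (quotGraph G C).dist (proj G C v) (proj G C y) := by
  obtain ⟨P, hP⟩ := hG.exists_walk_length_eq_dist u y
  have k1 := quotDist_eq_cnt hG hCc P hP
  have hsub := piC_sub hCc huv (G.mem_edgeSet.mpr hadj) P
  have hends := piC_ends hG hCc P hP
  have hvu : G.dist v u = 1 := SimpleGraph.dist_eq_one_iff_adj.mpr hadj.symm
  have g1 : gfun G u v u = -1 := by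
    unfold gfun; rw [SimpleGraph.dist_self]; omega
  have g2 : gfun G u v y = 0 := by unfold gfun; omega
  rw [g1, g2] at hsub
  obtain ⟨Q⟩ := hG.preconnected v y
  obtain ⟨R, hR⟩ := (reach_proj (C := C) Q).exists_walk_length_eq_dist
  have hb := varPi_walk hG hCc P R
  rw [varPi_mk, varPi_mk, hR, abs_le] at hb
  omega

open Classical in
lemma main_iff (hG : G.Connected) (hCc : ∀ e ∈ C, ∀ f, Theta G e f → f ∈ C)
    {u v : W} (huv : s(u, v) ∈ C) (hadj : G.Adj u v) (x : W) :
    G.dist u x < G.dist v x ↔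
      (quotGraph G C).dist (proj G C u) (proj G C x)
        < (quotGraph G C).dist (proj G C v) (proj G C x) := by
  have b1 : G.dist u x ≤ G.dist v x + 1 := dist_adj_le hG hadj
  have b2 : G.dist v x ≤ G.dist u x + 1 := dist_adj_le hG hadj.symm
  have hvu : s(v, u) ∈ C := by rwa [Sym2.eq_swap] at huv
  rcases lt_trichotomy (G.dist u x) (G.dist v x) with hlt | heq | hgt
  · have hd : G.dist v x = G.dist u x + 1 := by omega
    have h := dir1 hG hCc hvu hadj.symm hd
    constructor <;> intro <;> omega
  · have h1 := dir2half hG hCc huv hadj heq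
    have h2 := dir2half hG hCc hvu hadj.symm heq.symm
    constructor <;> intro <;> omega
  · have hd : G.dist u x = G.dist v x + 1 := by omega
    have h := dir1 hG hCc huv hadj hd
    constructor <;> intro <;> omega

end CutMethod

/-- With `e = uv ∈ E_i`, `U = ℓ_i(u)`, `V = ℓ_i(v)` and `E = UV` the
corresponding edge of `G_i = G/E_i`:
`N_u(e|G) = ⋃_{X ∈ N_U(E|G_i)} V(X)` and `N_v(e|G) = ⋃_{X ∈ N_V(E|G_i)} V(X)`. -/
theorem Nset_eq_iUnion {V : Type*} [Finite V] (G : SimpleGraph V) (hG : G.Connected)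
    {k : ℕ} (P : Fin k → Set (Sym2 V)) (hP : IsCPartition G P)
    (i : Fin k) (u v : V) (he : s(u, v) ∈ P i) :
    Nset G u v =
      ⋃ X ∈ Nset (quotGraph G (P i)) (proj G (P i) u) (proj G (P i) v), X.supp ∧
    Nset G v u =
      ⋃ X ∈ Nset (quotGraph G (P i)) (proj G (P i) v) (proj G (P i) u), X.supp :=  by
  obtain ⟨hcover, hdisj, hclosed⟩ := hP
  have hCe : P i ⊆ G.edgeSet := hcover ▸ Set.subset_iUnion P i
  have hCc : ∀ e ∈ P i, ∀ f, Theta G e f → f ∈ P i :=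
    fun e heC f hf => hclosed i e heC f (Relation.TransGen.single hf)
  have hadj : G.Adj u v := G.mem_edgeSet.mp (hCe he)
  have hvu : s(v, u) ∈ P i := by rwa [Sym2.eq_swap] at he
  have key : ∀ (a b : V), s(a, b) ∈ P i → G.Adj a b →
      Nset G a b =
        ⋃ X ∈ Nset (quotGraph G (P i)) (proj G (P i) a) (proj G (P i) b), X.supp := by
    intro a b hab hadj'
    ext x
    simp only [Nset, Set.mem_setOf_eq, Set.mem_iUnion]
    constructor
    · intro h
      exact ⟨proj G (P i) x, (main_iff hG hCc hab hadj' x).mp h,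
        (SimpleGraph.ConnectedComponent.mem_supp_iff _ _).mpr rfl⟩
    · rintro ⟨X, hX, hxX⟩
      rw [SimpleGraph.ConnectedComponent.mem_supp_iff] at hxX
      rw [← hxX] at hX
      exact (main_iff hG hCc hab hadj' x).mpr hX
  exact ⟨key u v he hadj, key v u hvu hadj.symm⟩

end SzegedCut
end

section
/- (Main theorem, cut method.) Let G_sw be a connected strength-weighted graph, let {E_1, …, E_k} be a c-partition of E(G), and let F be a regular function for G_sw. Then TI_F(G_sw) = Σ_{i=1}^k TI_F(G_i), where G_i = G_sw/E_i are the strength-weighted quotient graphs. -/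
open SimpleGraph

namespace SzegedCut

variable {V : Type*}

/-! ### Auxiliary machinery for the proof -/

section Aux

open scoped Classical

/-- Number of elements of a list lying in a set. -/
noncomputable def ecount (C : Set (Sym2 V)) : List (Sym2 V) → ℕ
  | [] => 0
  | e :: l => (if e ∈ C then 1 else 0) + ecount C l

@[simp] lemma ecount_nil (C : Set (Sym2 V)) : ecount C ([] : List (Sym2 V)) = 0 := rfl

@[simp] lemma ecount_cons (C : Set (Sym2 V)) (e : Sym2 V) (l : List (Sym2 V)) :
    ecount C (e :: l) = (if e ∈ C then 1 else 0) + ecount C l := rfl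

lemma ecount_append (C : Set (Sym2 V)) (l₁ l₂ : List (Sym2 V)) :
    ecount C (l₁ ++ l₂) = ecount C l₁ + ecount C l₂ := by
  induction l₁ with
  | nil => simp
  | cons e l ih => simp [ih]; ring

lemma ecount_eq_zero (C : Set (Sym2 V)) {l : List (Sym2 V)} (h : ∀ e ∈ l, e ∉ C) :
    ecount C l = 0 := by
  induction l with
  | nil => rfl
  | cons e l ih =>
    rw [ecount_cons, if_neg (h e List.mem_cons_self),
      ih fun f hf => h f (List.mem_cons_of_mem e hf)]

/-- The telescoping function `Σ_{e=ab ∈ Q, e∈C} (d(a,z) - d(b,z))` along a walk `Q`. -/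
noncomputable def gq (G : SimpleGraph V) (C : Set (Sym2 V)) (z : V) :
    ∀ {x y : V}, G.Walk x y → ℤ
  | _, _, Walk.nil => 0
  | x, _, @Walk.cons _ _ _ b _ _ p =>
      (if s(x, b) ∈ C then (G.dist x z : ℤ) - (G.dist b z : ℤ) else 0) + gq G C z p

@[simp] lemma gq_nil (G : SimpleGraph V) (C : Set (Sym2 V)) (z x : V) :
    gq G C z (Walk.nil : G.Walk x x) = 0 := rfl

@[simp] lemma gq_cons (G : SimpleGraph V) (C : Set (Sym2 V)) (z : V) {x y b : V}
    (h : G.Adj x b) (p : G.Walk b y) :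
    gq G C z (Walk.cons h p) =
      (if s(x, b) ∈ C then (G.dist x z : ℤ) - (G.dist b z : ℤ) else 0) + gq G C z p := rfl

lemma theta_symm {G : SimpleGraph V} {e f : Sym2 V} (h : Theta G e f) : Theta G f e := by
  obtain ⟨he, hf, u₁, v₁, u₂, v₂, h₁, h₂, hne⟩ := h
  refine ⟨hf, he, u₂, v₂, u₁, v₁, h₂, h₁, fun hc => hne ?_⟩
  have c1 : G.dist u₂ u₁ = G.dist u₁ u₂ := SimpleGraph.dist_comm
  have c2 : G.dist v₂ v₁ = G.dist v₁ v₂ := SimpleGraph.dist_comm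
  have c3 : G.dist u₂ v₁ = G.dist v₁ u₂ := SimpleGraph.dist_comm
  have c4 : G.dist u₁ v₂ = G.dist v₂ u₁ := SimpleGraph.dist_comm
  omega

lemma not_theta_dist {G : SimpleGraph V} {a b z z' : V}
    (he : s(a, b) ∈ G.edgeSet) (hf : s(z, z') ∈ G.edgeSet)
    (h : ¬ Theta G s(a, b) s(z, z')) :
    (G.dist a z : ℤ) - G.dist b z = (G.dist a z' : ℤ) - G.dist b z' := by
  have key : G.dist a z + G.dist b z' = G.dist a z' + G.dist z b := by
    by_contra hne
    exact h ⟨he, hf, a, b, z, z', rfl, rfl, hne⟩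
  have c1 : G.dist z b = G.dist b z := SimpleGraph.dist_comm
  omega

/-- If the step `zz'` is an edge not in the `Θ`-closed set `C`, then `gq` does not change. -/
lemma gq_step_not_mem {G : SimpleGraph V} {C : Set (Sym2 V)}
    (hcl : ∀ e ∈ C, ∀ f, Theta G e f → f ∈ C)
    {z z' : V} (hf : s(z, z') ∈ G.edgeSet) (hfC : s(z, z') ∉ C)
    {x y : V} (Q : G.Walk x y) : gq G C z Q = gq G C z' Q := by
  induction Q with
  | nil => rfl
  | cons h p ih =>
    rename_i a b c
    simp only [gq_cons, ih]
    congr 1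
    by_cases hm : s(a, b) ∈ C
    · rw [if_pos hm, if_pos hm]
      exact not_theta_dist (G.mem_edgeSet.mpr h) hf fun ht => hfC (hcl _ hm _ ht)
    · rw [if_neg hm, if_neg hm]

lemma gq_univ {G : SimpleGraph V} (z : V) {x y : V} (Q : G.Walk x y) :
    gq G Set.univ z Q = (G.dist x z : ℤ) - G.dist y z := by
  induction Q with
  | nil => simp
  | cons h p ih => simp [ih]

/-- If the step `zz'` is an edge in the `Θ`-closed set `C`, the change of `gq` telescopes. -/
lemma gq_step_mem {G : SimpleGraph V} {C : Set (Sym2 V)}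
    (hcl : ∀ e ∈ C, ∀ f, Theta G e f → f ∈ C)
    {z z' : V} (hf : s(z, z') ∈ G.edgeSet) (hfC : s(z, z') ∈ C)
    {x y : V} (Q : G.Walk x y) :
    gq G C z' Q - gq G C z Q =
      ((G.dist x z' : ℤ) - G.dist y z') - ((G.dist x z : ℤ) - G.dist y z) := by
  have key : gq G C z' Q - gq G C z Q = gq G Set.univ z' Q - gq G Set.univ z Q := by
    induction Q with
    | nil => simp
    | cons h p ih =>
      rename_i a b c
      simp only [gq_cons, if_pos (Set.mem_univ s(a, b))]
      by_cases hm : s(a, b) ∈ C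
      · rw [if_pos hm, if_pos hm]
        omega
      · rw [if_neg hm, if_neg hm]
        have hnt : ¬ Theta G s(a, b) s(z, z') := fun ht =>
          hm (hcl _ hfC _ (theta_symm ht))
        have := not_theta_dist (G.mem_edgeSet.mpr h) hf hnt
        omega
  rw [key, gq_univ, gq_univ]

lemma adj_dist_eq_one {G : SimpleGraph V} {a b : V} (h : G.Adj a b) : G.dist a b = 1 :=
  SimpleGraph.dist_eq_one_iff_adj.mpr h

/-- Change of `gq` along an arbitrary walk is bounded by twice the number of its `C`-edges. -/
lemma abs_gq_sub_le {G : SimpleGraph V} (hG : G.Connected) {C : Set (Sym2 V)}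
    (hcl : ∀ e ∈ C, ∀ f, Theta G e f → f ∈ C)
    {s t : V} (W : G.Walk s t) {x y : V} (Q : G.Walk x y) :
    |gq G C t Q - gq G C s Q| ≤ 2 * (ecount C W.edges : ℤ) := by
  induction W with
  | nil => simp
  | cons h W' ih =>
    rename_i a b c
    rw [Walk.edges_cons, ecount_cons]
    by_cases hm : s(a, b) ∈ C
    · have step := gq_step_mem hcl (G.mem_edgeSet.mpr h) hm Q
      have hd1 : G.dist x b ≤ G.dist x a + 1 := by
        have := hG.dist_triangle (u := x) (v := a) (w := b)
        rw [adj_dist_eq_one h] at this; exact this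
      have hd2 : G.dist x a ≤ G.dist x b + 1 := by
        have := hG.dist_triangle (u := x) (v := b) (w := a)
        rw [adj_dist_eq_one h.symm] at this; exact this
      have hd3 : G.dist y b ≤ G.dist y a + 1 := by
        have := hG.dist_triangle (u := y) (v := a) (w := b)
        rw [adj_dist_eq_one h] at this; exact this
      have hd4 : G.dist y a ≤ G.dist y b + 1 := by
        have := hG.dist_triangle (u := y) (v := b) (w := a)
        rw [adj_dist_eq_one h.symm] at this; exact this
      have tri : |gq G C c Q - gq G C a Q| ≤
          |gq G C c Q - gq G C b Q| + |gq G C b Q - gq G C a Q| := abs_sub_le _ _ _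
      have habs : |gq G C b Q - gq G C a Q| ≤ 2 := by
        rw [step, abs_le]
        have c1 : G.dist x b = G.dist b x := SimpleGraph.dist_comm
        have c2 : G.dist x a = G.dist a x := SimpleGraph.dist_comm
        have c3 : G.dist y b = G.dist b y := SimpleGraph.dist_comm
        have c4 : G.dist y a = G.dist a y := SimpleGraph.dist_comm
        constructor <;> [skip; skip] <;> · push_cast; omega
      rw [if_pos hm]
      have := ih
      push_cast
      omega
    · have step := gq_step_not_mem hcl (G.mem_edgeSet.mpr h) hm Q
      rw [if_neg hm, step]
      have := ih
      push_cast
      omega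

/-- Value of `gq` at the left end of a shortest walk. -/
lemma gq_eq_neg_ecount {G : SimpleGraph V} (hG : G.Connected) (C : Set (Sym2 V)) {x : V} :
    ∀ {a y : V} (Q : G.Walk a y), G.dist x a + Q.length = G.dist x y →
      gq G C x Q = -(ecount C Q.edges : ℤ) := by
  intro a y Q
  induction Q with
  | nil => simp
  | cons h p ih =>
    rename_i a' b c
    intro hyp
    rw [Walk.length_cons] at hyp
    have hby : G.dist b c ≤ p.length := SimpleGraph.dist_le p
    have t1 : G.dist x c ≤ G.dist x b + G.dist b c := hG.dist_triangle
    have t2 : G.dist x b ≤ G.dist x a' + 1 := by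
      have := hG.dist_triangle (u := x) (v := a') (w := b)
      rw [adj_dist_eq_one h] at this; exact this
    have hxb : G.dist x b = G.dist x a' + 1 := by omega
    have hp : G.dist x b + p.length = G.dist x c := by omega
    rw [gq_cons, Walk.edges_cons, ecount_cons, ih hp]
    have c1 : G.dist a' x = G.dist x a' := SimpleGraph.dist_comm
    have c2 : G.dist b x = G.dist x b := SimpleGraph.dist_comm
    by_cases hm : s(a', b) ∈ C
    · rw [if_pos hm, if_pos hm]; push_cast; omega
    · rw [if_neg hm, if_neg hm]; push_cast; omega

/-- Value of `gq` at the right end of a shortest walk. -/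
lemma gq_eq_ecount {G : SimpleGraph V} (hG : G.Connected) (C : Set (Sym2 V)) :
    ∀ {a y : V} (Q : G.Walk a y), Q.length = G.dist a y →
      gq G C y Q = (ecount C Q.edges : ℤ) := by
  intro a y Q
  induction Q with
  | nil => simp
  | cons h p ih =>
    rename_i a' b c
    intro hyp
    rw [Walk.length_cons] at hyp
    have hby : G.dist b c ≤ p.length := SimpleGraph.dist_le p
    have t1 : G.dist a' c ≤ 1 + G.dist b c := by
      have := hG.dist_triangle (u := a') (v := b) (w := c)
      rw [adj_dist_eq_one h] at this; exact this
    have hbp : p.length = G.dist b c := by omega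
    have hay : G.dist a' c = G.dist b c + 1 := by omega
    rw [gq_cons, Walk.edges_cons, ecount_cons, ih hbp]
    by_cases hm : s(a', b) ∈ C
    · rw [if_pos hm, if_pos hm]; push_cast; omega
    · rw [if_neg hm, if_neg hm]; push_cast; omega

lemma proj_eq_of_not_mem {G : SimpleGraph V} {C : Set (Sym2 V)} {a b : V}
    (h : G.Adj a b) (hn : s(a, b) ∉ C) : proj G C a = proj G C b :=
  ConnectedComponent.sound (((G.deleteEdges_adj).mpr ⟨h, hn⟩).reachable)

/-- Projection of a walk to the quotient graph. -/
lemma exists_quot_walk (G : SimpleGraph V) (C : Set (Sym2 V)) {s t : V} (W : G.Walk s t) :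
    ∃ R : (quotGraph G C).Walk (proj G C s) (proj G C t), R.length ≤ ecount C W.edges := by
  induction W with
  | nil => exact ⟨Walk.nil, by simp⟩
  | cons h W' ih =>
    rename_i a b c
    obtain ⟨R', hR'⟩ := ih
    rw [Walk.edges_cons, ecount_cons]
    by_cases heq : proj G C a = proj G C b
    · exact ⟨R'.copy heq.symm rfl, by rw [Walk.length_copy]; omega⟩
    · have hm : s(a, b) ∈ C := by
        by_contra hn
        exact heq (proj_eq_of_not_mem h hn)
      refine ⟨Walk.cons (show (quotGraph G C).Adj _ _ from ⟨heq, a, b, h, rfl, rfl⟩) R', ?_⟩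
      rw [Walk.length_cons, if_pos hm]
      omega

/-- A walk in the quotient graph lifts to a walk in `G` with at most as many `C`-edges. -/
lemma exists_lift_walk (G : SimpleGraph V) (C : Set (Sym2 V)) :
    ∀ {X Y : Comp G C} (R : (quotGraph G C).Walk X Y) (s t : V),
      proj G C s = X → proj G C t = Y →
      ∃ W : G.Walk s t, ecount C W.edges ≤ R.length := by
  intro X Y R
  induction R with
  | nil =>
    intro s t hs ht
    have : (G.deleteEdges C).Reachable s t :=
      ConnectedComponent.exact (by rw [proj] at hs ht; rw [hs, ht])
    obtain ⟨w⟩ := this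
    refine ⟨w.transfer G (fun e he => ((G.edgeSet_deleteEdges C ▸
      w.edges_subset_edgeSet he) : e ∈ G.edgeSet \ C).1), ?_⟩
    rw [Walk.edges_transfer]
    rw [ecount_eq_zero C (fun e he => ((G.edgeSet_deleteEdges C ▸
      w.edges_subset_edgeSet he) : e ∈ G.edgeSet \ C).2)]
    simp
  | cons hadj R' ih =>
    rename_i X' Z Y'
    intro s t hs ht
    obtain ⟨hne, x', z', hxz, hx, hz⟩ := id hadj
    have : (G.deleteEdges C).Reachable s x' :=
      ConnectedComponent.exact (by rw [proj] at hs hx; rw [hs, hx])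
    obtain ⟨w₁⟩ := this
    obtain ⟨W₂, hW₂⟩ := ih z' t hz ht
    refine ⟨(w₁.transfer G (fun e he => ((G.edgeSet_deleteEdges C ▸
      w₁.edges_subset_edgeSet he) : e ∈ G.edgeSet \ C).1)).append (Walk.cons hxz W₂), ?_⟩
    rw [Walk.edges_append, ecount_append, Walk.edges_transfer, Walk.edges_cons, ecount_cons,
      ecount_eq_zero C (fun e he => ((G.edgeSet_deleteEdges C ▸
        w₁.edges_subset_edgeSet he) : e ∈ G.edgeSet \ C).2), Walk.length_cons]
    by_cases hm : s(x', z') ∈ C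
    · rw [if_pos hm]; omega
    · rw [if_neg hm]; omega

/-- **Key lemma**: on a shortest path, the number of edges from a `Θ*`-closed set `C`
equals the distance between the projections in the quotient graph. -/
lemma ecount_eq_quot_dist {G : SimpleGraph V} (hG : G.Connected) {C : Set (Sym2 V)}
    (hcl : ∀ e ∈ C, ∀ f, Theta G e f → f ∈ C)
    {x y : V} (Q : G.Walk x y) (hQ : Q.length = G.dist x y) :
    ecount C Q.edges = (quotGraph G C).dist (proj G C x) (proj G C y) := by
  obtain ⟨R, hR⟩ := exists_quot_walk G C Q
  have hle : (quotGraph G C).dist (proj G C x) (proj G C y) ≤ ecount C Q.edges :=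
    le_trans (SimpleGraph.dist_le R) hR
  have hreach : (quotGraph G C).Reachable (proj G C x) (proj G C y) := ⟨R⟩
  obtain ⟨R₀, hR₀⟩ := hreach.exists_walk_length_eq_dist
  obtain ⟨W, hW⟩ := exists_lift_walk G C R₀ x y rfl rfl
  have hgx : gq G C x Q = -(ecount C Q.edges : ℤ) :=
    gq_eq_neg_ecount hG C Q (by rw [SimpleGraph.dist_self]; omega)
  have hgy : gq G C y Q = (ecount C Q.edges : ℤ) := gq_eq_ecount hG C Q hQ
  have habs := abs_gq_sub_le hG hcl W Q
  rw [hgy, hgx, sub_neg_eq_add] at habs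
  have h2 : (ecount C Q.edges : ℤ) + ecount C Q.edges ≤ 2 * ecount C W.edges :=
    le_trans (le_abs_self _) habs
  have : ecount C Q.edges ≤ ecount C W.edges := by omega
  omega

section Partition

variable {G : SimpleGraph V} {k : ℕ} {P : Fin k → Set (Sym2 V)}

lemma part_subset_edgeSet (hP : IsCPartition G P) (i : Fin k) : P i ⊆ G.edgeSet :=
  fun e he => hP.1 ▸ Set.mem_iUnion.mpr ⟨i, he⟩

lemma part_closed (hP : IsCPartition G P) (i : Fin k) :
    ∀ e ∈ P i, ∀ f, Theta G e f → f ∈ P i :=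
  fun e he f ht => hP.2.2 i e he f (Relation.TransGen.single ht)

lemma exists_part (hP : IsCPartition G P) {e : Sym2 V} (he : e ∈ G.edgeSet) :
    ∃ i, e ∈ P i :=
  Set.mem_iUnion.mp (hP.1.symm ▸ he)

lemma not_mem_part_of_ne (hP : IsCPartition G P) {i j : Fin k} (hij : i ≠ j)
    {e : Sym2 V} (he : e ∈ P i) : e ∉ P j :=
  fun hj => Set.disjoint_left.mp (hP.2.1 i j hij) he hj

open scoped Classical in
lemma sum_ecount (hP : IsCPartition G P) {l : List (Sym2 V)}
    (hl : ∀ e ∈ l, e ∈ G.edgeSet) : ∑ i, ecount (P i) l = l.length := by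
  induction l with
  | nil => simp
  | cons e l ih =>
    simp only [ecount_cons, List.length_cons, Finset.sum_add_distrib]
    have h1 : (∑ i, if e ∈ P i then 1 else 0 : ℕ) = 1 := by
      obtain ⟨i₀, hi₀⟩ := exists_part hP (hl e List.mem_cons_self)
      rw [Finset.sum_eq_single i₀]
      · rw [if_pos hi₀]
      · intro j _ hj
        rw [if_neg (not_mem_part_of_ne hP (Ne.symm hj) hi₀)]
      · intro h; exact absurd (Finset.mem_univ i₀) h
    rw [ih fun f hf => hl f (List.mem_cons_of_mem e hf), h1]
    omega

/-- **Graham–Winkler**: distances decompose as sums of quotient distances. -/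
lemma dist_eq_sum_quot_dist (hG : G.Connected) (hP : IsCPartition G P) (x y : V) :
    G.dist x y =
      ∑ i, (quotGraph G (P i)).dist (proj G (P i) x) (proj G (P i) y) := by
  obtain ⟨Q, hQ⟩ := hG.exists_walk_length_eq_dist x y
  have : ∀ i, ecount (P i) Q.edges =
      (quotGraph G (P i)).dist (proj G (P i) x) (proj G (P i) y) := fun i =>
    ecount_eq_quot_dist hG (part_closed hP i) Q hQ
  calc G.dist x y = Q.edges.length := by rw [Walk.length_edges, hQ]
    _ = ∑ i, ecount (P i) Q.edges :=
        (sum_ecount hP fun e he => Q.edges_subset_edgeSet he).symm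
    _ = _ := Finset.sum_congr rfl fun i _ => this i

/-- The central difference formula: for an edge `uv ∈ P i`, the difference of distances
to any vertex `x` is computed in the quotient graph `G/P i`. -/
lemma dist_sub_dist_eq (hG : G.Connected) (hP : IsCPartition G P) {i : Fin k} {u v : V}
    (he : s(u, v) ∈ P i) (x : V) :
    (G.dist u x : ℤ) - G.dist v x =
      ((quotGraph G (P i)).dist (proj G (P i) u) (proj G (P i) x) : ℤ) -
        (quotGraph G (P i)).dist (proj G (P i) v) (proj G (P i) x) := by
  have hadj : G.Adj u v := G.mem_edgeSet.mp (part_subset_edgeSet hP i he)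
  have hproj : ∀ j, j ≠ i → proj G (P j) u = proj G (P j) v := fun j hj =>
    proj_eq_of_not_mem hadj (not_mem_part_of_ne hP (Ne.symm hj) he)
  rw [dist_eq_sum_quot_dist hG hP u x, dist_eq_sum_quot_dist hG hP v x]
  push_cast
  rw [← Finset.sum_sub_distrib]
  rw [Finset.sum_eq_single i]
  · intro j _ hj
    rw [hproj j hj]
    ring
  · intro h; exact absurd (Finset.mem_univ i) h

@[simp] lemma eDist_mk (G : SimpleGraph V) (u x y : V) :
    eDist G u s(x, y) = min (G.dist u x) (G.dist u y) := rfl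

lemma proj_ne_of_mem (hG : G.Connected) (hP : IsCPartition G P) {i : Fin k} {u v : V}
    (he : s(u, v) ∈ P i) : proj G (P i) u ≠ proj G (P i) v := by
  have hadj : G.Adj u v := G.mem_edgeSet.mp (part_subset_edgeSet hP i he)
  have hQ : (Walk.cons hadj Walk.nil : G.Walk u v).length = G.dist u v := by
    simp [adj_dist_eq_one hadj]
  have := ecount_eq_quot_dist hG (part_closed hP i) (Walk.cons hadj Walk.nil) hQ
  open scoped Classical in
  rw [Walk.edges_cons, Walk.edges_nil, ecount_cons, ecount_nil, if_pos he] at this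
  intro hcontra
  rw [← hcontra, SimpleGraph.dist_self] at this
  omega

lemma quot_adj_of_mem (hG : G.Connected) (hP : IsCPartition G P) {i : Fin k} {u v : V}
    (he : s(u, v) ∈ P i) :
    (quotGraph G (P i)).Adj (proj G (P i) u) (proj G (P i) v) :=
  ⟨proj_ne_of_mem hG hP he, u, v, G.mem_edgeSet.mp (part_subset_edgeSet hP i he), rfl, rfl⟩

lemma map_mem_quot_edgeSet (hG : G.Connected) (hP : IsCPartition G P) {i : Fin k}
    {e : Sym2 V} (he : e ∈ P i) :
    e.map (proj G (P i)) ∈ (quotGraph G (P i)).edgeSet := by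
  induction e using Sym2.ind with
  | _ u v =>
    rw [Sym2.map_pair_eq]
    exact (quotGraph G (P i)).mem_edgeSet.mpr (quot_adj_of_mem hG hP he)

lemma mem_part_of_mem_hatE (hP : IsCPartition G P) {i : Fin k} {E : Sym2 (Comp G (P i))}
    (hE : E ∈ (quotGraph G (P i)).edgeSet) {e : Sym2 V} (he : e ∈ hatE G (P i) E) :
    e ∈ P i := by
  obtain ⟨hes, hmap⟩ := he
  by_contra hn
  induction e using Sym2.ind with
  | _ x y =>
    have : proj G (P i) x = proj G (P i) y :=
      proj_eq_of_not_mem (G.mem_edgeSet.mp hes) hn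
    rw [Sym2.map_pair_eq] at hmap
    exact (quotGraph G (P i)).not_isDiag_of_mem_edgeSet hE
      (hmap ▸ Sym2.mk_isDiag_iff.mpr this)

lemma part_eq_biUnion_hatE (hG : G.Connected) (hP : IsCPartition G P) (i : Fin k) :
    P i = ⋃ E ∈ (quotGraph G (P i)).edgeSet, hatE G (P i) E := by
  ext e
  constructor
  · intro he
    exact Set.mem_biUnion (map_mem_quot_edgeSet hG hP he)
      ⟨part_subset_edgeSet hP i he, rfl⟩
  · intro he
    obtain ⟨E, hE, heE⟩ := Set.mem_iUnion₂.mp he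
    exact mem_part_of_mem_hatE hP hE heE

/-- `eDist`-difference formula for an internal edge. -/
lemma eDist_sub_internal (hG : G.Connected) (hP : IsCPartition G P) {i : Fin k} {u v x y : V}
    (he : s(u, v) ∈ P i) (hf : s(x, y) ∈ G.edgeSet) (hfn : s(x, y) ∉ P i) :
    (eDist G u s(x, y) : ℤ) - eDist G v s(x, y) =
      ((quotGraph G (P i)).dist (proj G (P i) u) (proj G (P i) x) : ℤ) -
        (quotGraph G (P i)).dist (proj G (P i) v) (proj G (P i) x) := by
  have hxy : proj G (P i) x = proj G (P i) y :=
    proj_eq_of_not_mem (G.mem_edgeSet.mp hf) hfn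
  have h1 := dist_sub_dist_eq hG hP he x
  have h2 := dist_sub_dist_eq hG hP he y
  rw [← hxy] at h2
  set A : ℤ := ((quotGraph G (P i)).dist (proj G (P i) u) (proj G (P i) x) : ℤ) with hA
  set A' : ℤ := ((quotGraph G (P i)).dist (proj G (P i) v) (proj G (P i) x) : ℤ) with hA'
  have e1 : (G.dist u x : ℤ) = G.dist v x + (A - A') := by omega
  have e2 : (G.dist u y : ℤ) = G.dist v y + (A - A') := by omega
  rw [eDist_mk, eDist_mk]
  push_cast
  rw [e1, e2, min_add_add_right]
  ring

/-- `eDist`-difference formula for a crossing edge. -/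
lemma eDist_sub_crossing (hG : G.Connected) (hP : IsCPartition G P) {i : Fin k} {u v x y : V}
    (he : s(u, v) ∈ P i) (hf : s(x, y) ∈ P i) :
    (eDist G u s(x, y) : ℤ) - eDist G v s(x, y) =
      (eDist (quotGraph G (P i)) (proj G (P i) u) (Sym2.map (proj G (P i)) s(x, y)) : ℤ) -
        eDist (quotGraph G (P i)) (proj G (P i) v) (Sym2.map (proj G (P i)) s(x, y)) := by
  set lu := proj G (P i) u
  set lv := proj G (P i) v
  set lx := proj G (P i) x
  set ly := proj G (P i) y
  set A : ℤ := ((quotGraph G (P i)).dist lu lx : ℤ)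
  set B : ℤ := ((quotGraph G (P i)).dist lu ly : ℤ)
  set A' : ℤ := ((quotGraph G (P i)).dist lv lx : ℤ)
  set B' : ℤ := ((quotGraph G (P i)).dist lv ly : ℤ)
  have h1 : (G.dist u x : ℤ) - G.dist v x = A - A' := dist_sub_dist_eq hG hP he x
  have h2 : (G.dist u y : ℤ) - G.dist v y = B - B' := dist_sub_dist_eq hG hP he y
  have h3 : (G.dist u x : ℤ) - G.dist u y = A - B := by
    have := dist_sub_dist_eq hG hP hf u
    have c1 : G.dist x u = G.dist u x := SimpleGraph.dist_comm
    have c2 : G.dist y u = G.dist u y := SimpleGraph.dist_comm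
    have c3 : ((quotGraph G (P i)).dist (proj G (P i) x) (proj G (P i) u) : ℤ) = A := by
      rw [show (quotGraph G (P i)).dist (proj G (P i) x) (proj G (P i) u)
        = (quotGraph G (P i)).dist lu lx from SimpleGraph.dist_comm]
    have c4 : ((quotGraph G (P i)).dist (proj G (P i) y) (proj G (P i) u) : ℤ) = B := by
      rw [show (quotGraph G (P i)).dist (proj G (P i) y) (proj G (P i) u)
        = (quotGraph G (P i)).dist lu ly from SimpleGraph.dist_comm]
    omega
  have h4 : (G.dist v x : ℤ) - G.dist v y = A' - B' := by omega
  set K : ℤ := (G.dist u x : ℤ) - A with hK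
  have e1 : (G.dist u x : ℤ) = A + K := by omega
  have e2 : (G.dist u y : ℤ) = B + K := by omega
  have e3 : (G.dist v x : ℤ) = A' + K := by omega
  have e4 : (G.dist v y : ℤ) = B' + K := by omega
  rw [Sym2.map_pair_eq, eDist_mk, eDist_mk, eDist_mk, eDist_mk]
  push_cast
  rw [e1, e2, e3, e4, min_add_add_right, min_add_add_right]
  ring

/-- Decomposition of `N_u(e|G)` into supports of quotient components. -/
lemma Nset_decomp (hG : G.Connected) (hP : IsCPartition G P) {i : Fin k} {u v : V}
    (he : s(u, v) ∈ P i) :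
    Nset G u v =
      ⋃ X ∈ Nset (quotGraph G (P i)) (proj G (P i) u) (proj G (P i) v), X.supp := by
  ext x
  have hd := dist_sub_dist_eq hG hP he x
  constructor
  · intro h
    have h' : G.dist u x < G.dist v x := h
    have hlt : (quotGraph G (P i)).dist (proj G (P i) u) (proj G (P i) x) <
        (quotGraph G (P i)).dist (proj G (P i) v) (proj G (P i) x) := by omega
    exact Set.mem_biUnion hlt rfl
  · intro h
    obtain ⟨X, hX, hx⟩ := Set.mem_iUnion₂.mp h
    have hpx : proj G (P i) x = X := hx
    rw [← hpx] at hX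
    have hlt : (quotGraph G (P i)).dist (proj G (P i) u) (proj G (P i) x) <
        (quotGraph G (P i)).dist (proj G (P i) v) (proj G (P i) x) := hX
    show G.dist u x < G.dist v x
    omega

/-- Decomposition of `N_0(e|G)` into supports of quotient components. -/
lemma N0set_decomp (hG : G.Connected) (hP : IsCPartition G P) {i : Fin k} {u v : V}
    (he : s(u, v) ∈ P i) :
    N0set G u v =
      ⋃ X ∈ N0set (quotGraph G (P i)) (proj G (P i) u) (proj G (P i) v), X.supp := by
  ext x
  have hd := dist_sub_dist_eq hG hP he x
  constructor
  · intro h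
    have h' : G.dist u x = G.dist v x := h
    have hlt : (quotGraph G (P i)).dist (proj G (P i) u) (proj G (P i) x) =
        (quotGraph G (P i)).dist (proj G (P i) v) (proj G (P i) x) := by omega
    exact Set.mem_biUnion hlt rfl
  · intro h
    obtain ⟨X, hX, hx⟩ := Set.mem_iUnion₂.mp h
    have hpx : proj G (P i) x = X := hx
    rw [← hpx] at hX
    have hlt : (quotGraph G (P i)).dist (proj G (P i) u) (proj G (P i) x) =
        (quotGraph G (P i)).dist (proj G (P i) v) (proj G (P i) x) := hX
    show G.dist u x = G.dist v x
    omega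

/-- Decomposition of `M_u(e|G)`. -/
lemma Mset_decomp (hG : G.Connected) (hP : IsCPartition G P) {i : Fin k} {u v : V}
    (he : s(u, v) ∈ P i) :
    Mset G u v =
      (⋃ X ∈ Nset (quotGraph G (P i)) (proj G (P i) u) (proj G (P i) v),
        compEdges G (P i) X) ∪
      (⋃ E ∈ Mset (quotGraph G (P i)) (proj G (P i) u) (proj G (P i) v),
        hatE G (P i) E) := by
  ext f
  induction f using Sym2.ind with
  | _ x y =>
    constructor
    · rintro ⟨hfe, hlt⟩
      by_cases hfC : s(x, y) ∈ P i
      · refine Set.mem_union_right _ (Set.mem_biUnion ?_ ⟨hfe, rfl⟩)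
        refine ⟨map_mem_quot_edgeSet hG hP hfC, ?_⟩
        have hsub := eDist_sub_crossing hG hP he hfC
        omega
      · have hxy := proj_eq_of_not_mem (G.mem_edgeSet.mp hfe) hfC
        have hsub := eDist_sub_internal hG hP he hfe hfC
        refine Set.mem_union_left _ (Set.mem_biUnion (x := proj G (P i) x) ?_ ?_)
        · show (quotGraph G (P i)).dist (proj G (P i) u) (proj G (P i) x) <
            (quotGraph G (P i)).dist (proj G (P i) v) (proj G (P i) x)
          omega
        · refine ⟨?_, ?_⟩
          · rw [G.edgeSet_deleteEdges]; exact ⟨hfe, hfC⟩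
          · intro w hw
            rcases Sym2.mem_iff.mp hw with rfl | rfl
            · exact rfl
            · exact hxy.symm
    · intro h
      rcases h with h | h
      · obtain ⟨X, hX, hf⟩ := Set.mem_iUnion₂.mp h
        obtain ⟨hfe', hsupp⟩ := hf
        rw [G.edgeSet_deleteEdges] at hfe'
        obtain ⟨hfe, hfC⟩ := hfe'
        have hpx : proj G (P i) x = X := hsupp x (Sym2.mem_mk_left x y)
        have hsub := eDist_sub_internal hG hP he hfe hfC
        rw [hpx] at hsub
        have hX' : (quotGraph G (P i)).dist (proj G (P i) u) X <
            (quotGraph G (P i)).dist (proj G (P i) v) X := hX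
        exact ⟨hfe, by omega⟩
      · obtain ⟨E, hE, hf⟩ := Set.mem_iUnion₂.mp h
        obtain ⟨hEedge, hElt⟩ := hE
        have hfC : s(x, y) ∈ P i := mem_part_of_mem_hatE hP hEedge hf
        obtain ⟨hfe, hmap⟩ := hf
        have hsub := eDist_sub_crossing hG hP he hfC
        rw [hmap] at hsub
        exact ⟨hfe, by omega⟩

/-- Decomposition of `M_0(e|G)`. -/
lemma M0set_decomp (hG : G.Connected) (hP : IsCPartition G P) {i : Fin k} {u v : V}
    (he : s(u, v) ∈ P i) :
    M0set G u v =
      (⋃ X ∈ N0set (quotGraph G (P i)) (proj G (P i) u) (proj G (P i) v),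
        compEdges G (P i) X) ∪
      (⋃ E ∈ M0set (quotGraph G (P i)) (proj G (P i) u) (proj G (P i) v),
        hatE G (P i) E) := by
  ext f
  induction f using Sym2.ind with
  | _ x y =>
    constructor
    · rintro ⟨hfe, hlt⟩
      by_cases hfC : s(x, y) ∈ P i
      · refine Set.mem_union_right _ (Set.mem_biUnion ?_ ⟨hfe, rfl⟩)
        refine ⟨map_mem_quot_edgeSet hG hP hfC, ?_⟩
        have hsub := eDist_sub_crossing hG hP he hfC
        omega
      · have hxy := proj_eq_of_not_mem (G.mem_edgeSet.mp hfe) hfC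
        have hsub := eDist_sub_internal hG hP he hfe hfC
        refine Set.mem_union_left _ (Set.mem_biUnion (x := proj G (P i) x) ?_ ?_)
        · show (quotGraph G (P i)).dist (proj G (P i) u) (proj G (P i) x) =
            (quotGraph G (P i)).dist (proj G (P i) v) (proj G (P i) x)
          omega
        · refine ⟨?_, ?_⟩
          · rw [G.edgeSet_deleteEdges]; exact ⟨hfe, hfC⟩
          · intro w hw
            rcases Sym2.mem_iff.mp hw with rfl | rfl
            · exact rfl
            · exact hxy.symm
    · intro h
      rcases h with h | h
      · obtain ⟨X, hX, hf⟩ := Set.mem_iUnion₂.mp h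
        obtain ⟨hfe', hsupp⟩ := hf
        rw [G.edgeSet_deleteEdges] at hfe'
        obtain ⟨hfe, hfC⟩ := hfe'
        have hpx : proj G (P i) x = X := hsupp x (Sym2.mem_mk_left x y)
        have hsub := eDist_sub_internal hG hP he hfe hfC
        rw [hpx] at hsub
        have hX' : (quotGraph G (P i)).dist (proj G (P i) u) X =
            (quotGraph G (P i)).dist (proj G (P i) v) X := hX
        exact ⟨hfe, by omega⟩
      · obtain ⟨E, hE, hf⟩ := Set.mem_iUnion₂.mp h
        obtain ⟨hEedge, hElt⟩ := hE
        have hfC : s(x, y) ∈ P i := mem_part_of_mem_hatE hP hEedge hf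
        obtain ⟨hfe, hmap⟩ := hf
        have hsub := eDist_sub_crossing hG hP he hfC
        rw [hmap] at hsub
        exact ⟨hfe, by omega⟩

end Partition

section Sums

lemma pairwiseDisjoint_supp (G' : SimpleGraph V) (s : Set G'.ConnectedComponent) :
    s.PairwiseDisjoint ConnectedComponent.supp := fun X _ Y _ hne =>
  Set.disjoint_left.mpr fun x hx hy => hne ((Eq.symm hx).trans hy)

lemma pairwiseDisjoint_compEdges (G : SimpleGraph V) (C : Set (Sym2 V))
    (s : Set (Comp G C)) : s.PairwiseDisjoint (compEdges G C) := by
  intro X _ Y _ hne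
  refine Set.disjoint_left.mpr ?_
  intro f hfX hfY
  induction f using Sym2.ind with
  | _ x y =>
    exact hne ((Eq.symm (hfX.2 x (Sym2.mem_mk_left x y))).trans
      (hfY.2 x (Sym2.mem_mk_left x y)))

lemma pairwiseDisjoint_hatE (G : SimpleGraph V) (C : Set (Sym2 V))
    (s : Set (Sym2 (Comp G C))) : s.PairwiseDisjoint (hatE G C) := fun E _ E' _ hne =>
  Set.disjoint_left.mpr fun f hf hf' => hne ((Eq.symm hf.2).trans hf'.2)

lemma disjoint_compEdges_hatE {G : SimpleGraph V} {k : ℕ} {P : Fin k → Set (Sym2 V)}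
    (hP : IsCPartition G P) (i : Fin k) (A : Set (Comp G (P i)))
    (B : Set (Sym2 (Comp G (P i)))) (hB : B ⊆ (quotGraph G (P i)).edgeSet) :
    Disjoint (⋃ X ∈ A, compEdges G (P i) X) (⋃ E ∈ B, hatE G (P i) E) := by
  refine Set.disjoint_left.mpr ?_
  intro f hfA hfB
  obtain ⟨X, _, hfX⟩ := Set.mem_iUnion₂.mp hfA
  obtain ⟨E, hE, hfE⟩ := Set.mem_iUnion₂.mp hfB
  have h1 : f ∉ P i := by
    have := hfX.1
    rw [G.edgeSet_deleteEdges] at this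
    exact this.2
  exact h1 (mem_part_of_mem_hatE hP (hB hE) hfE)

variable [Finite V]

lemma vsum_biUnion {α β : Type*} [Finite β] {s : Set α} {t : α → Set β}
    (hd : s.PairwiseDisjoint t) (hs : s.Finite) (w : β → ℝ) :
    vsum (⋃ x ∈ s, t x) w = vsum s fun x => vsum (t x) w :=
  finsum_mem_biUnion hd hs fun _ _ => Set.toFinite _

lemma vsum_union {α : Type*} [Finite α] {s t : Set α} (h : Disjoint s t) (w : α → ℝ) :
    vsum (s ∪ t) w = vsum s w + vsum t w :=
  finsum_mem_union h (Set.toFinite s) (Set.toFinite t)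

lemma vsum_add {α : Type*} [Finite α] (s : Set α) (w w' : α → ℝ) :
    vsum s (fun x => w x + w' x) = vsum s w + vsum s w' :=
  finsum_mem_add_distrib (Set.toFinite s)

lemma vsum_mul {α : Type*} [Finite α] (s : Set α) (w : α → ℝ) (c : ℝ) :
    (∑ᶠ x ∈ s, w x * c) = vsum s w * c := by
  rw [vsum, finsum_mem_eq_finite_toFinset_sum _ (Set.toFinite s),
    finsum_mem_eq_finite_toFinset_sum _ (Set.toFinite s), Finset.sum_mul]

variable {G : SimpleGraph V} {k : ℕ} {P : Fin k → Set (Sym2 V)}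

lemma nval_eq (hG : G.Connected) (hP : IsCPartition G P) {i : Fin k} {u v : V}
    (he : s(u, v) ∈ P i) (wv : V → ℝ) :
    nval G wv u v =
      nval (quotGraph G (P i)) (qwv G (P i) wv) (proj G (P i) u) (proj G (P i) v) := by
  rw [nval, nval, Nset_decomp hG hP he,
    vsum_biUnion (pairwiseDisjoint_supp _ _) (Set.toFinite _) wv]
  rfl

lemma n0val_eq (hG : G.Connected) (hP : IsCPartition G P) {i : Fin k} {u v : V}
    (he : s(u, v) ∈ P i) (wv : V → ℝ) :
    n0val G wv u v =
      n0val (quotGraph G (P i)) (qwv G (P i) wv) (proj G (P i) u) (proj G (P i) v) := by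
  rw [n0val, n0val, N0set_decomp hG hP he,
    vsum_biUnion (pairwiseDisjoint_supp _ _) (Set.toFinite _) wv]
  rfl

lemma mval_eq (hG : G.Connected) (hP : IsCPartition G P) {i : Fin k} {u v : V}
    (he : s(u, v) ∈ P i) (sv : V → ℝ) (se : Sym2 V → ℝ) :
    mval G sv se u v =
      mval (quotGraph G (P i)) (qsv G (P i) sv se) (qse G (P i) se)
        (proj G (P i) u) (proj G (P i) v) := by
  rw [mval, mval, Nset_decomp hG hP he, Mset_decomp hG hP he,
    vsum_biUnion (pairwiseDisjoint_supp _ _) (Set.toFinite _) sv,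
    vsum_union (disjoint_compEdges_hatE hP i _ _ fun E hE => hE.1) se,
    vsum_biUnion (pairwiseDisjoint_compEdges _ _ _) (Set.toFinite _) se,
    vsum_biUnion (pairwiseDisjoint_hatE _ _ _) (Set.toFinite _) se]
  have hq : vsum (Nset (quotGraph G (P i)) (proj G (P i) u) (proj G (P i) v))
      (qsv G (P i) sv se) =
      vsum (Nset (quotGraph G (P i)) (proj G (P i) u) (proj G (P i) v))
        (fun X => vsum (compEdges G (P i) X) se) +
      vsum (Nset (quotGraph G (P i)) (proj G (P i) u) (proj G (P i) v))
        (fun X => vsum X.supp sv) := by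
    rw [← vsum_add]
    rfl
  rw [hq]
  have hq2 : vsum (Mset (quotGraph G (P i)) (proj G (P i) u) (proj G (P i) v))
      (fun E => vsum (hatE G (P i) E) se) =
      vsum (Mset (quotGraph G (P i)) (proj G (P i) u) (proj G (P i) v))
        (qse G (P i) se) := rfl
  rw [hq2]
  ring

lemma m0val_eq (hG : G.Connected) (hP : IsCPartition G P) {i : Fin k} {u v : V}
    (he : s(u, v) ∈ P i) (sv : V → ℝ) (se : Sym2 V → ℝ) :
    m0val G sv se u v =
      m0val (quotGraph G (P i)) (qsv G (P i) sv se) (qse G (P i) se)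
        (proj G (P i) u) (proj G (P i) v) := by
  rw [m0val, m0val, N0set_decomp hG hP he, M0set_decomp hG hP he,
    vsum_biUnion (pairwiseDisjoint_supp _ _) (Set.toFinite _) sv,
    vsum_union (disjoint_compEdges_hatE hP i _ _ fun E hE => hE.1) se,
    vsum_biUnion (pairwiseDisjoint_compEdges _ _ _) (Set.toFinite _) se,
    vsum_biUnion (pairwiseDisjoint_hatE _ _ _) (Set.toFinite _) se]
  have hq : vsum (N0set (quotGraph G (P i)) (proj G (P i) u) (proj G (P i) v))
      (qsv G (P i) sv se) =
      vsum (N0set (quotGraph G (P i)) (proj G (P i) u) (proj G (P i) v))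
        (fun X => vsum (compEdges G (P i) X) se) +
      vsum (N0set (quotGraph G (P i)) (proj G (P i) u) (proj G (P i) v))
        (fun X => vsum X.supp sv) := by
    rw [← vsum_add]
    rfl
  rw [hq]
  have hq2 : vsum (M0set (quotGraph G (P i)) (proj G (P i) u) (proj G (P i) v))
      (fun E => vsum (hatE G (P i) E) se) =
      vsum (M0set (quotGraph G (P i)) (proj G (P i) u) (proj G (P i) v))
        (qse G (P i) se) := rfl
  rw [hq2]
  ring

lemma FEdge_eq (hG : G.Connected) (hP : IsCPartition G P) {i : Fin k} {u v : V}
    (he : s(u, v) ∈ P i) (wv sv : V → ℝ) (se : Sym2 V → ℝ)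
    (F : ℝ → ℝ → ℝ → ℝ → ℝ → ℝ → ℝ) (hF : IsRegular F) :
    FEdge G wv sv se F hF s(u, v) =
      FEdge (quotGraph G (P i)) (qwv G (P i) wv) (qsv G (P i) sv se) (qse G (P i) se) F hF
        s(proj G (P i) u, proj G (P i) v) := by
  have hvu : s(v, u) ∈ P i := by rwa [Sym2.eq_swap]
  rw [FEdge, FEdge, Sym2.lift_mk, Sym2.lift_mk]
  dsimp only
  rw [nval_eq hG hP he wv, nval_eq hG hP hvu wv, mval_eq hG hP he sv se,
    mval_eq hG hP hvu sv se, n0val_eq hG hP he wv, m0val_eq hG hP he sv se]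

lemma FEdge_map (hG : G.Connected) (hP : IsCPartition G P) {i : Fin k} {e : Sym2 V}
    (he : e ∈ P i) (wv sv : V → ℝ) (se : Sym2 V → ℝ)
    (F : ℝ → ℝ → ℝ → ℝ → ℝ → ℝ → ℝ) (hF : IsRegular F) :
    FEdge G wv sv se F hF e =
      FEdge (quotGraph G (P i)) (qwv G (P i) wv) (qsv G (P i) sv se) (qse G (P i) se) F hF
        (e.map (proj G (P i))) := by
  induction e using Sym2.ind with
  | _ u v =>
    rw [Sym2.map_pair_eq]
    exact FEdge_eq hG hP he wv sv se F hF

lemma TI_part (hG : G.Connected) (hP : IsCPartition G P) (i : Fin k)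
    (wv sv : V → ℝ) (we se : Sym2 V → ℝ)
    (F : ℝ → ℝ → ℝ → ℝ → ℝ → ℝ → ℝ) (hF : IsRegular F) :
    (∑ᶠ e ∈ P i, we e * FEdge G wv sv se F hF e) =
      TI (quotGraph G (P i)) (qwv G (P i) wv) (qsv G (P i) sv se)
        (qwe G (P i) we) (qse G (P i) se) F hF := by
  conv_lhs => rw [part_eq_biUnion_hatE hG hP i]
  rw [finsum_mem_biUnion (pairwiseDisjoint_hatE _ _ _) (Set.toFinite _)
      (fun _ _ => Set.toFinite _), TI]
  apply finsum_mem_congr rfl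
  intro E hE
  have hcongr : ∀ e ∈ hatE G (P i) E,
      we e * FEdge G wv sv se F hF e =
      we e * FEdge (quotGraph G (P i)) (qwv G (P i) wv) (qsv G (P i) sv se)
        (qse G (P i) se) F hF E := by
    intro e heh
    rw [FEdge_map hG hP (mem_part_of_mem_hatE hP hE heh) wv sv se F hF, heh.2]
  rw [finsum_mem_congr rfl hcongr, vsum_mul]
  rfl

end Sums

end Aux

/-- **Main theorem, the general cut method.** For a connected
strength-weighted graph `G_sw`, a c-partition `{E_1, …, E_k}` of `E(G)` and a regular
function `F`: `TI_F(G_sw) = Σ_{i=1}^k TI_F(G_i)`, where `G_i = G_sw/E_i` are the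
strength-weighted quotient graphs. -/
theorem TI_eq_sum_quotients {V : Type*} [Finite V] (G : SimpleGraph V) (hG : G.Connected)
    (wv sv : V → ℝ) (we se : Sym2 V → ℝ)
    (hwv : ∀ x, 0 ≤ wv x) (hsv : ∀ x, 0 ≤ sv x)
    (hwe : ∀ e, 0 ≤ we e) (hse : ∀ e, 0 ≤ se e)
    {k : ℕ} (P : Fin k → Set (Sym2 V)) (hP : IsCPartition G P)
    (F : ℝ → ℝ → ℝ → ℝ → ℝ → ℝ → ℝ) (hF : IsRegular F) :
    TI G wv sv we se F hF =
      ∑ i : Fin k, TI (quotGraph G (P i)) (qwv G (P i) wv) (qsv G (P i) sv se)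
        (qwe G (P i) we) (qse G (P i) se) F hF := by
  rw [TI, show G.edgeSet = ⋃ i, P i from hP.1.symm,
    finsum_mem_iUnion (fun i j hij => hP.2.1 i j hij) (fun i => Set.toFinite _),
    finsum_eq_sum_of_fintype]
  exact Finset.sum_congr rfl fun i _ => TI_part hG hP i wv sv we se F hF

end SzegedCut
end
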